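/- arXiv:0710.4509 — 7 statements merged into one kernel-verified Lean document; each statement's English description precedes it below -/
import Mathlib

section
/- If p(1) ≥ 0, then p(σ) ≥ 0 for every σ ≥ 1. -/
/-- Lemma 1 of the paper (first case): if the quadratic `p` arising from the
Ψtc multigroup scheme satisfies `p 1 ≥ 0`, then `p σ ≥ 0` for all `σ ≥ 1`. -/
theorem stmt_0
    (u0 ustar a B B' C' C T0 Tstar : ℝ)
    (hu0 : 0 ≤ u0) (hustar : 0 ≤ ustar) (ha : 0 < a) (hB : 0 < B)
    (hB' : 0 < B') (hC' : 0 ≤ C')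
    (b c : ℝ)
    (hb : 2 * b = u0 - ustar + a * B + C' * ustar)
    (hc : c = C' * (u0 - ustar + a * B) + a * B' * (T0 - Tstar - C))
    (p : ℝ → ℝ)
    (hp : ∀ σ : ℝ, p σ = ustar * σ ^ 2 + 2 * b * σ + c)
    (h1 : 0 ≤ p 1) :
    ∀ σ : ℝ, 1 ≤ σ → 0 ≤ p σ := by
  intro σ hσ
  rw [hp σ]
  rw [hp 1] at h1
  nlinarith [mul_nonneg (sub_nonneg.2 hσ) (by nlinarith [mul_nonneg hC' hustar, mul_nonneg hustar (le_trans zero_le_one hσ)] : (0:ℝ) ≤ ustar * σ + u0 + a * B + C' * ustar)]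
end

section
/- As t → ∞, σmin(t)/t tends to (k/2)·(√((α − β)² + 4γ) − (α + β)), where α = B/ustar, β = (Σ_{ℓ=1}^{G} kℓ·B'ℓ)/(k·ρcv), and γ = (B'/ustar)·(Σ_{ℓ=1}^{G} kℓ·Bℓ)/(k·ρcv). -/
open Filter Topology

/-!
`σmin t` is the root `(√(b² - u c) - b) / u` of `u σ² + 2 b σ + c = 0` with `b = b̃ t`, `c = c̃ t`,
and this root is positively homogeneous under `(b, c) ↦ (m b, m² c)`, so `σmin t / t` is the root for
the coefficients `b̃ t / t` and `c̃ t / t²`. These are affine in `t⁻¹`, hence converge, and continuity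
of the root in the coefficients gives the limit.
-/

/-- The root `(√(b² - u c) - b) / u` of `u σ² + 2 b σ + c = 0`. -/
noncomputable def quadRoot (u b c : ℝ) : ℝ := (√(b ^ 2 - u * c) - b) / u

theorem quadRoot_mul_mul_sq (u b c : ℝ) {m : ℝ} (hm : 0 ≤ m) :
    quadRoot u (m * b) (m ^ 2 * c) = m * quadRoot u b c := by
  have hdisc : (m * b) ^ 2 - u * (m ^ 2 * c) = m ^ 2 * (b ^ 2 - u * c) := by ring
  rw [quadRoot, quadRoot, hdisc, Real.sqrt_mul (sq_nonneg m), Real.sqrt_sq hm]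
  ring

theorem quadRoot_mul_mul {u : ℝ} (hu : 0 < u) (b c : ℝ) :
    quadRoot u (u * b) (u * c) = √(b ^ 2 - c) - b := by
  have hdisc : (u * b) ^ 2 - u * (u * c) = u ^ 2 * (b ^ 2 - c) := by ring
  rw [quadRoot, hdisc, Real.sqrt_mul (sq_nonneg u), Real.sqrt_sq hu.le]
  field_simp

theorem Filter.Tendsto.quadRoot {α : Type*} {l : Filter α} {f g : α → ℝ} {b c : ℝ} (u : ℝ)
    (hf : Tendsto f l (𝓝 b)) (hg : Tendsto g l (𝓝 c)) :
    Tendsto (fun x => quadRoot u (f x) (g x)) l (𝓝 (quadRoot u b c)) :=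
  (((hf.pow 2).sub (hg.const_mul u)).sqrt.sub hf).div_const u

theorem tendsto_quadRoot_div_atTop {f g : ℝ → ℝ} {b c : ℝ} (u : ℝ)
    (hf : Tendsto (fun t => f t / t) atTop (𝓝 b))
    (hg : Tendsto (fun t => g t / t ^ 2) atTop (𝓝 c)) :
    Tendsto (fun t => quadRoot u (f t) (g t) / t) atTop (𝓝 (quadRoot u b c)) := by
  refine (hf.quadRoot u hg).congr' ?_
  filter_upwards [eventually_gt_atTop 0] with t ht
  rw [div_eq_inv_mul, div_eq_inv_mul, ← inv_pow, quadRoot_mul_mul_sq _ _ _ (inv_nonneg.2 ht.le),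
    div_eq_inv_mul]

theorem tendsto_add_mul_div_atTop {𝕜 : Type*} [Field 𝕜] [LinearOrder 𝕜] [IsStrictOrderedRing 𝕜]
    [TopologicalSpace 𝕜] [OrderTopology 𝕜] (p q : 𝕜) :
    Tendsto (fun t => (p + q * t) / t) atTop (𝓝 q) := by
  have h := (tendsto_inv_atTop_zero (𝕜 := 𝕜)).const_mul p |>.add_const q
  rw [mul_zero, zero_add] at h
  refine h.congr' ?_
  filter_upwards [eventually_ne_atTop 0] with t ht
  field_simp

theorem stmt_3_general
    (G : ℕ)
    (ustar ρcv k B B' u0 T0 Tstar : ℝ)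
    (hustar : 0 < ustar) (hk : 0 < k)
    (kk Bk B'k : Fin G → ℝ)
    (a C C' b c σmin : ℝ → ℝ)
    (ha : ∀ t : ℝ, a t = k * t)
    (hC : ∀ t : ℝ, C t = t * (∑ ℓ, kk ℓ * Bk ℓ) / ρcv)
    (hC' : ∀ t : ℝ, C' t = t * (∑ ℓ, kk ℓ * B'k ℓ) / ρcv)
    (hb : ∀ t : ℝ, 2 * b t = u0 - ustar + a t * B + C' t * ustar)
    (hc : ∀ t : ℝ, c t = C' t * (u0 - ustar + a t * B)
                          + a t * B' * (T0 - Tstar - C t))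
    (hσmin : ∀ t : ℝ, σmin t = (Real.sqrt (b t ^ 2 - ustar * c t) - b t) / ustar)
    (α β γ : ℝ)
    (hα : α = B / ustar)
    (hβ : β = (∑ ℓ, kk ℓ * B'k ℓ) / (k * ρcv))
    (hγ : γ = (B' / ustar) * (∑ ℓ, kk ℓ * Bk ℓ) / (k * ρcv)) :
    Tendsto (fun t => σmin t / t) atTop
      (nhds ((k / 2) * (Real.sqrt ((α - β) ^ 2 + 4 * γ) - (α + β)))) := by
  set S' := ∑ ℓ, kk ℓ * B'k ℓ
  -- Limits written as `(m * b, m ^ 2 * (u * c))`, so that the two scaling lemmas evaluate the root.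
  have hb_lim : Tendsto (fun t => b t / t) atTop (𝓝 (k / 2 * (ustar * (α + β)))) := by
    refine (tendsto_add_mul_div_atTop ((u0 - ustar) / 2) _).congr' ?_
    filter_upwards [eventually_ne_atTop 0] with t ht
    have h2b := hb t
    rw [ha, hC'] at h2b
    rw [hα, hβ]
    field_simp
    linear_combination -h2b
  have hc_lim : Tendsto (fun t => c t / t ^ 2) atTop
      (𝓝 ((k / 2) ^ 2 * (ustar * (4 * (α * β - γ))))) := by
    refine (tendsto_add_mul_div_atTop (S' / ρcv * (u0 - ustar) + k * B' * (T0 - Tstar)) _).congr'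
      ?_
    filter_upwards [eventually_ne_atTop 0] with t ht
    rw [hc, ha, hC, hC', hα, hβ, hγ]
    field_simp
    ring
  have hσ : σmin = fun t => quadRoot ustar (b t) (c t) := funext hσmin
  rw [hσ]
  convert tendsto_quadRoot_div_atTop ustar hb_lim hc_lim using 2
  rw [quadRoot_mul_mul_sq _ _ _ (by positivity), quadRoot_mul_mul hustar]
  ring_nf

/-- Large-timestep asymptotics of the Ψtc parameter from Lemma 1 of the paper:
`σmin(t)/t → (k/2)·(√((α−β)² + 4γ) − (α+β))` as `t → ∞`. -/
theorem stmt_3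
    (G : ℕ) (hG : 1 ≤ G)
    (ustar ρcv k B B' u0 T0 Tstar : ℝ)
    (hustar : 0 < ustar) (hρcv : 0 < ρcv) (hk : 0 < k)
    (hB : 0 < B) (hB' : 0 < B') (hu0 : 0 ≤ u0)
    (kk Bk B'k : Fin G → ℝ)
    (hkk : ∀ ℓ, 0 < kk ℓ) (hBk : ∀ ℓ, 0 < Bk ℓ) (hB'k : ∀ ℓ, 0 < B'k ℓ)
    (a C C' b c σmin : ℝ → ℝ)
    (ha : ∀ t : ℝ, a t = k * t)
    (hC : ∀ t : ℝ, C t = t * (∑ ℓ, kk ℓ * Bk ℓ) / ρcv)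
    (hC' : ∀ t : ℝ, C' t = t * (∑ ℓ, kk ℓ * B'k ℓ) / ρcv)
    (hb : ∀ t : ℝ, 2 * b t = u0 - ustar + a t * B + C' t * ustar)
    (hc : ∀ t : ℝ, c t = C' t * (u0 - ustar + a t * B)
                          + a t * B' * (T0 - Tstar - C t))
    (hσmin : ∀ t : ℝ, σmin t = (Real.sqrt (b t ^ 2 - ustar * c t) - b t) / ustar)
    (α β γ : ℝ)
    (hα : α = B / ustar)
    (hβ : β = (∑ ℓ, kk ℓ * B'k ℓ) / (k * ρcv))
    (hγ : γ = (B' / ustar) * (∑ ℓ, kk ℓ * Bk ℓ) / (k * ρcv)) :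
    Tendsto (fun t => σmin t / t) atTop
      (nhds ((k / 2) * (Real.sqrt ((α - β) ^ 2 + 4 * γ) - (α + β)))) :=
  stmt_3_general G ustar ρcv k B B' u0 T0 Tstar hustar hk kk Bk B'k a C C' b c σmin ha hC hC' hb hc
    hσmin α β γ hα hβ hγ
end

section
/- The inequality Σ_{g=1}^{G} η'_g·ε̂_g/Λ'_g ≤ ζ·(1 − Σ_{g=1}^{G} f_g/Λ'_g) holds if and only if Σ_{g=1}^{G} (C'_g/Λ'_g)·(η'_g/(1 − f_g + σ/a_g)) ≤ ζ·(σ + Σ_{g=1}^{G} (C'_g/Λ'_g)·(Λ'_g − 1)). -/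
/-!
Both criteria are the same inequality multiplied by `σ + C' > 0`. Since `f_g (σ + C') = C'_g`,
the left-hand side turns term by term into the left-hand side of (omineq2), and
`(1 - ∑ f_g / Λ'_g)(σ + C') = σ + ∑ (C'_g - C'_g / Λ'_g) = σ + ∑ (C'_g / Λ'_g)(Λ'_g - 1)`.
-/

open Finset

variable {ι : Type*} (s : Finset ι)

theorem sum_mul_div_div_div_mul {S : ℝ} (hS : S ≠ 0) (c η Λ D : ι → ℝ) :
    (∑ g ∈ s, η g * (c g / S / D g) / Λ g) * S = ∑ g ∈ s, c g / Λ g * (η g / D g) := by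
  rw [sum_mul]
  refine sum_congr rfl fun g _ => ?_
  field_simp

theorem one_sub_sum_div_div_mul {σ : ℝ} (c Λ : ι → ℝ) (hS : σ + ∑ ℓ ∈ s, c ℓ ≠ 0)
    (hΛ : ∀ g ∈ s, Λ g ≠ 0) :
    (1 - ∑ g ∈ s, c g / (σ + ∑ ℓ ∈ s, c ℓ) / Λ g) * (σ + ∑ ℓ ∈ s, c ℓ) =
      σ + ∑ g ∈ s, c g / Λ g * (Λ g - 1) := by
  have hterm : ∀ g ∈ s, c g / Λ g * (Λ g - 1) = c g - c g / Λ g := fun g hg => by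
    rw [mul_sub, mul_one, div_mul_cancel₀ _ (hΛ g hg)]
  have hscaled : (∑ g ∈ s, c g / (σ + ∑ ℓ ∈ s, c ℓ) / Λ g) * (σ + ∑ ℓ ∈ s, c ℓ) =
      ∑ g ∈ s, c g / Λ g := by
    rw [sum_mul]
    exact sum_congr rfl fun g _ => by rw [div_right_comm, div_mul_cancel₀ _ hS]
  rw [sub_mul, one_mul, hscaled, sum_congr rfl hterm, sum_sub_distrib]
  ring

theorem stmt_8_general
    (G : ℕ)
    (σ ζ : ℝ) (hσ : 1 ≤ σ)
    (a C'g η' : Fin G → ℝ)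
    (ha : ∀ g, 0 < a g) (hC'g : ∀ g, 0 < C'g g) (hη' : ∀ g, 0 ≤ η' g)
    (C' : ℝ) (hC' : C' = ∑ ℓ, C'g ℓ)
    (f Λ' ε : Fin G → ℝ)
    (hf : ∀ g, f g = C'g g / (σ + C'))
    (hΛ' : ∀ g, Λ' g = η' g + 1 + σ / a g)
    (hε : ∀ g, ε g = f g / (1 - f g + σ / a g)) :
    ((∑ g, η' g * ε g / Λ' g) ≤ ζ * (1 - ∑ g, f g / Λ' g)) ↔
      ((∑ g, (C'g g / Λ' g) * (η' g / (1 - f g + σ / a g)))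
        ≤ ζ * (σ + ∑ g, (C'g g / Λ' g) * (Λ' g - 1))) := by
  subst hC'
  obtain rfl : f = _ := funext hf
  obtain rfl : ε = _ := funext hε
  have hS : 0 < σ + ∑ ℓ, C'g ℓ :=
    add_pos_of_pos_of_nonneg (by linarith) (sum_nonneg fun g _ => (hC'g g).le)
  have hΛ'_ne : ∀ g ∈ univ, Λ' g ≠ 0 := fun g _ => by
    have := div_pos (by linarith : (0 : ℝ) < σ) (ha g)
    rw [hΛ' g]
    linarith [hη' g]
  rw [← mul_le_mul_iff_of_pos_right hS, mul_assoc, sum_mul_div_div_div_mul _ hS.ne',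
    one_sub_sum_div_div_mul _ _ _ hS.ne' hΛ'_ne]

/-- Algebraic equivalence between the error-contraction criterion for the
two-step iteration of the Ψtc multigroup scheme and inequality (omineq2)
of the paper. -/
theorem stmt_8
    (G : ℕ) (hG : 1 ≤ G)
    (σ ζ : ℝ) (hσ : 1 ≤ σ) (hζ : 0 < ζ)
    (a C'g η' : Fin G → ℝ)
    (ha : ∀ g, 0 < a g) (hC'g : ∀ g, 0 < C'g g) (hη' : ∀ g, 0 ≤ η' g)
    (C' : ℝ) (hC' : C' = ∑ ℓ, C'g ℓ)
    (f Λ' ε : Fin G → ℝ)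
    (hf : ∀ g, f g = C'g g / (σ + C'))
    (hΛ' : ∀ g, Λ' g = η' g + 1 + σ / a g)
    (hε : ∀ g, ε g = f g / (1 - f g + σ / a g)) :
    ((∑ g, η' g * ε g / Λ' g) ≤ ζ * (1 - ∑ g, f g / Λ' g)) ↔
      ((∑ g, (C'g g / Λ' g) * (η' g / (1 - f g + σ / a g)))
        ≤ ζ * (σ + ∑ g, (C'g g / Λ' g) * (Λ' g - 1))) :=
  stmt_8_general G σ ζ hσ a C'g η' ha hC'g hη' C' hC' f Λ' ε hf hΛ' hε
end

section
/- For every σ ≥ 1, the inequality η'/(1 − f + σ/a) ≤ ζ·(Λ' − 1) holds if and only if s(σ) ≥ 0, where s(σ) = σ³ + αs·σ² + βs·σ + γs with αs = a·(1 + η') + C', βs = a·((1 + η')·C' − C'g + a·η'·(1 − 1/ζ)), and γs = a²·η'·((1 − 1/ζ)·C' − C'g). -/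
/-- Per-group reduction of the error-contraction condition to nonnegativity of
a cubic in `σ`: for `σ ≥ 1`, `η'/(1 − f + σ/a) ≤ ζ·(Λ' − 1)` iff `s(σ) ≥ 0`. -/
theorem stmt_9
    (a η' ζ C'g C' : ℝ)
    (ha : 0 < a) (hη' : 0 ≤ η') (hζ : 0 < ζ)
    (hC'g : 0 < C'g) (hC' : 0 < C') (hCC : C'g ≤ C') :
    ∀ σ : ℝ, 1 ≤ σ →
      (η' / (1 - C'g / (σ + C') + σ / a)
          ≤ ζ * ((η' + 1 + σ / a) - 1) ↔
        0 ≤ σ ^ 3 + (a * (1 + η') + C') * σ ^ 2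
            + (a * ((1 + η') * C' - C'g + a * η' * (1 - 1 / ζ))) * σ
            + a ^ 2 * η' * ((1 - 1 / ζ) * C' - C'g)) := by
  intro σ hσ
  have hσC : 0 < σ + C' := by linarith
  have hD : 0 < 1 - C'g / (σ + C') + σ / a := by
    have h1 : C'g / (σ + C') < 1 := by
      rw [div_lt_one hσC]; linarith
    have h2 : 0 < σ / a := div_pos (by linarith) ha
    linarith
  rw [div_le_iff₀ hD]
  set R := ζ * ((η' + 1 + σ / a) - 1) with hR
  set D := 1 - C'g / (σ + C') + σ / a with hDdef
  have hk : 0 < a ^ 2 * (σ + C') := by positivity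
  have hid : (σ ^ 3 + (a * (1 + η') + C') * σ ^ 2
      + (a * ((1 + η') * C' - C'g + a * η' * (1 - 1 / ζ))) * σ
      + a ^ 2 * η' * ((1 - 1 / ζ) * C' - C'g)) * ζ
      = (R * D - η') * (a ^ 2 * (σ + C')) := by
    rw [hR, hDdef]
    field_simp
    ring
  constructor
  · intro h
    have h1 : 0 ≤ (R * D - η') * (a ^ 2 * (σ + C')) := by
      apply mul_nonneg _ hk.le; linarith
    rw [← hid] at h1
    exact (mul_nonneg_iff_of_pos_right hζ).mp h1
  · intro h
    have h1 : 0 ≤ (R * D - η') * (a ^ 2 * (σ + C')) := by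
      rw [← hid]; positivity
    have := (mul_nonneg_iff_of_pos_right hk).mp h1
    linarith
end

section
/- There exists t₀ > 0 such that for all t ≥ t₀: Σ_{g=1}^{G} η'_g·ε̂_g(t)/Λ'_g(t) > 1 − Σ_{g=1}^{G} f_g(t)/Λ'_g(t). In other words, with σ = 1 and ζ = 1, the error-contraction criterion of the two-step iteration fails for all sufficiently large timesteps. -/
/-!
With `M = ∑ m` and `β_g = m_g / M` we have `f_g(t) = m_g t / (1 + M t) → β_g`, `∑ β_g = 1` and
`1 / a_g(t) → 0`. Enlarging the denominator `1 - f_g + 1/a_g` of `ε̂_g` to `1 - f_g/2 + 1/a_g`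
bounds the `g`-th term `(η'_g ε̂_g + f_g) / Λ'_g` of the criterion from below by a quantity that
stays finite even when `G = 1`, where `ε̂_g` itself blows up. That lower bound tends to
`(η'_g β_g / (1 - β_g/2) + β_g) / (η'_g + 1) > β_g`, so the sum of the bounds eventually exceeds
`∑ β_g = 1`.
-/

open Filter Topology

lemma tendsto_mul_div_one_add_mul_atTop (m M : ℝ) (hM : M ≠ 0) :
    Tendsto (fun t => m * t / (1 + t * M)) atTop (𝓝 (m / M)) := by
  have hlim : Tendsto (fun t : ℝ => m / (t⁻¹ + M)) atTop (𝓝 (m / (0 + M))) :=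
    tendsto_const_nhds.div (tendsto_inv_atTop_zero.add tendsto_const_nhds) (by simpa using hM)
  rw [zero_add] at hlim
  refine hlim.congr' ?_
  filter_upwards [eventually_gt_atTop 0] with t ht
  field_simp

lemma mul_div_one_add_mul_mem_Ico {m M t : ℝ} (hm : 0 ≤ m) (hmM : m ≤ M) (ht : 0 < t) :
    m * t / (1 + t * M) ∈ Set.Ico 0 1 := by
  have hden : 0 < 1 + t * M := by nlinarith
  refine ⟨by positivity, (div_lt_one hden).2 ?_⟩
  nlinarith

lemma tendsto_one_div_mul_atTop {k : ℝ} (hk : 0 < k) :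
    Tendsto (fun t : ℝ => 1 / (k * t)) atTop (𝓝 0) := by
  simp only [one_div]
  exact tendsto_inv_atTop_zero.comp (tendsto_id.const_mul_atTop hk)

/-- The term `(η' ε̂ + f) / Λ'` of the criterion, with `x = 1 / a` and the denominator
`1 - f + x` of `ε̂` enlarged to `1 - f / 2 + x`. -/
noncomputable def relaxedCriterionTerm (η f x : ℝ) : ℝ :=
  (η * (f / (1 - f / 2 + x)) + f) / (η + 1 + x)

lemma relaxedCriterionTerm_le {η f x : ℝ} (hη : 0 ≤ η) (hf : 0 ≤ f) (hD : 0 < 1 - f + x) :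
    relaxedCriterionTerm η f x ≤ (η * (f / (1 - f + x)) + f) / (η + 1 + x) := by
  unfold relaxedCriterionTerm
  gcongr <;> linarith

lemma lt_relaxedCriterionTerm {η β : ℝ} (hη : 0 < η) (hβ : 0 < β) (hβ₂ : β < 2) :
    β < relaxedCriterionTerm η β 0 := by
  have hquot : β < β / (1 - β / 2) := by
    rw [lt_div_iff₀ (by linarith)]
    nlinarith
  unfold relaxedCriterionTerm
  rw [add_zero, add_zero, lt_div_iff₀ (by linarith)]
  nlinarith

lemma continuousAt_relaxedCriterionTerm {η β : ℝ} (hη : 0 ≤ η) (hβ₂ : β < 2) :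
    ContinuousAt (fun p : ℝ × ℝ => relaxedCriterionTerm η p.1 p.2) (β, 0) := by
  unfold relaxedCriterionTerm
  fun_prop (disch := simp only; linarith)

/-- Lemma 3 (L5) of the paper: with `σ = 1` and `ζ = 1`, the error-contraction
criterion of the two-step iteration fails for all sufficiently large
timesteps `t`. -/
theorem stmt_12
    (G : ℕ) (hG : 1 ≤ G)
    (k m η' : Fin G → ℝ)
    (hk : ∀ g, 0 < k g) (hm : ∀ g, 0 < m g) (hη' : ∀ g, 0 < η' g)
    (a C' f Λ' ε : Fin G → ℝ → ℝ)
    (ha : ∀ g, ∀ t : ℝ, a g t = k g * t)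
    (hC' : ∀ g, ∀ t : ℝ, C' g t = t * ∑ ℓ, m ℓ)
    (hf : ∀ g, ∀ t : ℝ, f g t = m g * t / (1 + C' g t))
    (hΛ' : ∀ g, ∀ t : ℝ, Λ' g t = η' g + 1 + 1 / a g t)
    (hε : ∀ g, ∀ t : ℝ, ε g t = f g t / (1 - f g t + 1 / a g t)) :
    ∃ t₀ : ℝ, 0 < t₀ ∧ ∀ t : ℝ, t₀ ≤ t →
      1 - ∑ g, f g t / Λ' g t < ∑ g, η' g * ε g t / Λ' g t := by
  set M := ∑ ℓ, m ℓ
  have hM : 0 < M := Finset.sum_pos (fun g _ => hm g) ⟨⟨0, hG⟩, Finset.mem_univ _⟩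
  have hmM : ∀ g, m g ≤ M := fun g => Finset.single_le_sum (fun i _ => (hm i).le) (Finset.mem_univ g)
  have hβ₂ : ∀ g, m g / M < 2 := fun g => ((div_le_one hM).2 (hmM g)).trans_lt one_lt_two
  have hf' : ∀ g t, f g t = m g * t / (1 + t * M) := fun g t => by rw [hf, hC']
  have hlim : Tendsto (fun t => ∑ g, relaxedCriterionTerm (η' g) (f g t) (1 / a g t)) atTop
      (𝓝 (∑ g, relaxedCriterionTerm (η' g) (m g / M) 0)) :=
    tendsto_finsetSum _ fun g _ =>
      (continuousAt_relaxedCriterionTerm (hη' g).le (hβ₂ g)).tendsto.comp <|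
        ((tendsto_mul_div_one_add_mul_atTop (m g) M hM.ne').congr fun t => (hf' g t).symm).prodMk_nhds
          ((tendsto_one_div_mul_atTop (hk g)).congr fun t => by rw [ha])
  have hlim_gt : 1 < ∑ g, relaxedCriterionTerm (η' g) (m g / M) 0 :=
    calc (1 : ℝ) = ∑ g, m g / M := by rw [← Finset.sum_div, div_self hM.ne']
      _ < _ := Finset.sum_lt_sum_of_nonempty ⟨⟨0, hG⟩, Finset.mem_univ _⟩ fun g _ =>
        lt_relaxedCriterionTerm (hη' g) (div_pos (hm g) hM) (hβ₂ g)
  obtain ⟨t₁, ht₁⟩ := eventually_atTop.1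
    ((hlim.eventually (lt_mem_nhds hlim_gt)).and (eventually_gt_atTop 0))
  refine ⟨max t₁ 1, lt_max_of_lt_right one_pos, fun t ht => ?_⟩
  obtain ⟨hlt, htpos⟩ := ht₁ t (le_of_max_le_left ht)
  rw [sub_lt_iff_lt_add, ← Finset.sum_add_distrib]
  refine hlt.trans_le (Finset.sum_le_sum fun g _ => ?_)
  obtain ⟨hf₀, hf₁⟩ := hf' g t ▸ mul_div_one_add_mul_mem_Ico (hm g).le (hmM g) htpos
  have ha₀ : 0 ≤ 1 / a g t := by rw [ha]; exact one_div_nonneg.2 (mul_pos (hk g) htpos).le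
  rw [← add_div, hε, hΛ']
  exact relaxedCriterionTerm_le (hη' g).le hf₀ (by linarith)
end

section
/- Let u : ℝ → ℝ be twice continuously differentiable on a neighborhood of x₀. Then the asymmetric coarse–fine interface difference quotient (1/h)·((u(x₀ + h) − u(x₀))/h − (u(x₀) − u(x₀ − 3h/2))/(3h/2)) tends to (5/4)·u''(x₀) as h → 0⁺. In particular, the discretization is inconsistent with u''(x₀) (its limit is (5/4)·u''(x₀), not u''(x₀)). -/
open Filter Asymptotics Topology

/-!
By Taylor's theorem with Peano remainder, the one-sided slope `(u (x₀ + a h) - u x₀) / (a h)`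
equals `u' x₀ + (a h / 2) u'' x₀ + o(h)`. In the difference of the slopes with steps `a h` and
`b h` the first derivative cancels, so after dividing by `h` the limit is `(a - b) / 2 · u'' x₀`.
The interface quotient is the case `a = 1`, `b = -3/2`, where `(a - b) / 2 = 5/4`.
-/

theorem ContDiffAt.isLittleO_taylor_two {E : Type*} [NormedAddCommGroup E] [NormedSpace ℝ E]
    {u : ℝ → E} {x₀ : ℝ} (hu : ContDiffAt ℝ 2 u x₀) :
    (fun x ↦ u x - u x₀ - (x - x₀) • deriv u x₀ - ((x - x₀) ^ 2 / 2) • deriv (deriv u) x₀)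
      =o[𝓝 x₀] fun x ↦ (x - x₀) ^ 2 := by
  obtain ⟨t, ht, hut⟩ := hu.contDiffOn le_rfl (by simp)
  obtain ⟨ε, hε, hball⟩ := Metric.mem_nhds_iff.mp ht
  have hopen : IsOpen (Metric.ball x₀ ε) := Metric.isOpen_ball
  have hx₀ : x₀ ∈ Metric.ball x₀ ε := Metric.mem_ball_self hε
  have htaylor := taylor_isLittleO (convex_ball x₀ ε) hx₀ (hut.mono hball)
  rw [hopen.nhdsWithin_eq hx₀] at htaylor
  refine htaylor.congr_left fun x ↦ ?_
  have hderiv (k : ℕ) : iteratedDerivWithin k u (Metric.ball x₀ ε) x₀ = deriv^[k] u x₀ :=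
    iteratedDerivWithin_of_isOpen_eq_iterate hopen hx₀
  have hderiv₂ : deriv^[2] u = deriv (deriv u) := rfl
  simp [taylor_within_apply, hderiv, hderiv₂, sub_sub, inv_mul_eq_div, one_add_one_eq_two]

theorem Asymptotics.IsLittleO.comp_add_mul_sq {E : Type*} [NormedAddCommGroup E]
    {f : ℝ → E} {x₀ : ℝ} (hf : f =o[𝓝 x₀] fun x ↦ (x - x₀) ^ 2) (c : ℝ) :
    (fun h ↦ f (x₀ + c * h)) =o[𝓝 0] fun h ↦ h ^ 2 := by
  have hlim : Tendsto (fun h : ℝ ↦ x₀ + c * h) (𝓝 0) (𝓝 x₀) :=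
    (by fun_prop : Continuous fun h : ℝ ↦ x₀ + c * h).tendsto' 0 x₀ (by simp)
  refine (hf.comp_tendsto hlim).trans_isBigO ?_
  simpa [Function.comp_def, mul_pow] using isBigO_const_mul_self (c ^ 2) (fun h : ℝ ↦ h ^ 2) (𝓝 0)

theorem ContDiffAt.tendsto_slope_sub_slope_div {u : ℝ → ℝ} {x₀ a b : ℝ}
    (hu : ContDiffAt ℝ 2 u x₀) (ha : a ≠ 0) (hb : b ≠ 0) :
    Tendsto (fun h ↦ ((u (x₀ + a * h) - u x₀) / (a * h) - (u (x₀ + b * h) - u x₀) / (b * h)) / h)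
      (𝓝[≠] 0) (𝓝 ((a - b) / 2 * deriv (deriv u) x₀)) := by
  set R := fun x ↦ u x - u x₀ - (x - x₀) • deriv u x₀ - ((x - x₀) ^ 2 / 2) • deriv (deriv u) x₀
  have hR : R =o[𝓝 x₀] fun x ↦ (x - x₀) ^ 2 := hu.isLittleO_taylor_two
  have hlim (c : ℝ) : Tendsto (fun h ↦ R (x₀ + c * h) / h ^ 2) (𝓝[≠] 0) (𝓝 0) :=
    (hR.comp_add_mul_sq c).tendsto_div_nhds_zero.mono_left nhdsWithin_le_nhds
  have hsum := (tendsto_const_nhds (x := (a - b) / 2 * deriv (deriv u) x₀)).add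
    (((hlim a).div_const a).sub ((hlim b).div_const b))
  simp only [zero_div, sub_self, add_zero] at hsum
  refine hsum.congr' (eventually_nhdsWithin_of_forall fun h (hh : h ≠ 0) ↦ ?_)
  simp only [R, smul_eq_mul]
  field_simp
  ring

/-- The asymmetric coarse–fine AMR interface difference quotient tends to
`(5/4)·u''(x₀)` as `h → 0⁺`; in particular it is inconsistent with `u''(x₀)`
whenever `u''(x₀) ≠ 0`. -/
theorem stmt_13
    (u : ℝ → ℝ) (x₀ : ℝ)
    (hu : ContDiffAt ℝ 2 u x₀) :
    Tendsto
      (fun h : ℝ =>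
        (1 / h) * ((u (x₀ + h) - u x₀) / h - (u x₀ - u (x₀ - 3 * h / 2)) / (3 * h / 2)))
      (nhdsWithin 0 (Set.Ioi 0))
      (nhds ((5 / 4) * deriv (deriv u) x₀)) ∧
    (deriv (deriv u) x₀ ≠ 0 →
      (5 / 4) * deriv (deriv u) x₀ ≠ deriv (deriv u) x₀) := by
  refine ⟨?_, fun hc heq ↦ hc (by linarith)⟩
  have hlim := (hu.tendsto_slope_sub_slope_div (a := 1) (b := -3 / 2) one_ne_zero
    (by norm_num)).mono_left (nhdsGT_le_nhdsNE 0)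
  rw [show (1 - -3 / 2 : ℝ) / 2 = 5 / 4 by norm_num] at hlim
  refine hlim.congr fun h ↦ ?_
  rw [one_mul, show x₀ + -3 / 2 * h = x₀ - 3 * h / 2 by ring]
  ring
end

section
/- Suppose that for every m ∈ {1,…,M} and every g ∈ {1,…,G}: u'_{g,m} = (F_{g,m} − F_{g,m−1})/h_m + γ_{g,m}·(B'_{g,m}·T'_m − u'_{g,m}) + (if m = m₀ then δF_g/h_m else 0), and that for every m: cv_m·T'_m = − Σ_{g=1}^{G} γ_{g,m}·(B'_{g,m}·T'_m − u'_{g,m}). Then Σ_{m=1}^{M} h_m·(cv_m·T'_m + Σ_{g=1}^{G} u'_{g,m}) = Σ_{g=1}^{G} (F_{g,M} − F_{g,0} + δF_g). -/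
/-! Summing the group equations of a cell and adding the temperature equation cancels the
emission–absorption coupling, so `h_m (cv_m T'_m + Σ_g u'_{g,m})` is the net face flux of cell `m`
plus the deposited mismatch. Summing over the cells, the fluxes telescope to the boundary values. -/

open Finset

lemma sum_Icc_one_sub_pred {A : Type*} [AddCommGroup A] (f : ℕ → A) (M : ℕ) :
    ∑ m ∈ Icc 1 M, (f m - f (m - 1)) = f M - f 0 := by
  induction M with
  | zero => simp
  | succ n ih =>
    rw [sum_Icc_succ_top (by omega), ih, Nat.add_sub_cancel]
    abel

lemma cell_energy_balance {ι : Type*} [Fintype ι] {h c : ℝ} (hh : h ≠ 0)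
    (u Fr Fl s δ : ι → ℝ) (hu : ∀ g, u g = (Fr g - Fl g) / h + s g + δ g / h)
    (hc : c = -∑ g, s g) :
    h * (c + ∑ g, u g) = ∑ g, (Fr g - Fl g + δ g) := by
  have hsum : ∑ g, u g = (∑ g, (Fr g - Fl g + δ g)) / h + ∑ g, s g := by
    simp only [hu, sum_div, ← sum_add_distrib]
    exact sum_congr rfl fun g _ => by ring
  rw [hc, hsum]
  field_simp
  ring

theorem stmt_16_general
    (M G : ℕ)
    (m₀ : ℕ) (hm₀ : m₀ ∈ Finset.Icc 1 M)
    (h : ℕ → ℝ) (hh : ∀ m ∈ Finset.Icc 1 M, 0 < h m)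
    (F γ B' u' : Fin G → ℕ → ℝ)
    (cv T' : ℕ → ℝ) (δF : Fin G → ℝ)
    (heq1 : ∀ m ∈ Finset.Icc 1 M, ∀ g : Fin G,
      u' g m = (F g m - F g (m - 1)) / h m
        + γ g m * (B' g m * T' m - u' g m)
        + (if m = m₀ then δF g / h m else 0))
    (heq2 : ∀ m ∈ Finset.Icc 1 M,
      cv m * T' m = - ∑ g, γ g m * (B' g m * T' m - u' g m)) :
    ∑ m ∈ Finset.Icc 1 M, h m * (cv m * T' m + ∑ g, u' g m)
      = ∑ g, (F g M - F g 0 + δF g) := by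
  have hcell : ∀ m ∈ Icc 1 M, h m * (cv m * T' m + ∑ g, u' g m)
      = ∑ g, (F g m - F g (m - 1) + if m = m₀ then δF g else 0) := fun m hm =>
    cell_energy_balance (hh m hm).ne' _ _ _ _ _
      (fun g => (heq1 m hm g).trans (by rw [ite_div, zero_div])) (heq2 m hm)
  rw [sum_congr rfl hcell, sum_comm]
  refine sum_congr rfl fun g _ => ?_
  rw [sum_add_distrib, sum_Icc_one_sub_pred, sum_ite_eq' _ m₀, if_pos hm₀]

/-- Energy-conservation identity for the multigroup AMR sync-solve correction
system: the flux mismatch deposited in cell `m₀` is exactly accounted for in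
the total corrected energy. -/
theorem stmt_16
    (M G : ℕ) (hM : 1 ≤ M) (hG : 1 ≤ G)
    (m₀ : ℕ) (hm₀ : m₀ ∈ Finset.Icc 1 M)
    (h : ℕ → ℝ) (hh : ∀ m ∈ Finset.Icc 1 M, 0 < h m)
    (F γ B' u' : Fin G → ℕ → ℝ)
    (cv T' : ℕ → ℝ) (δF : Fin G → ℝ)
    (heq1 : ∀ m ∈ Finset.Icc 1 M, ∀ g : Fin G,
      u' g m = (F g m - F g (m - 1)) / h m
        + γ g m * (B' g m * T' m - u' g m)
        + (if m = m₀ then δF g / h m else 0))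
    (heq2 : ∀ m ∈ Finset.Icc 1 M,
      cv m * T' m = - ∑ g, γ g m * (B' g m * T' m - u' g m)) :
    ∑ m ∈ Finset.Icc 1 M, h m * (cv m * T' m + ∑ g, u' g m)
      = ∑ g, (F g M - F g 0 + δF g) :=
  stmt_16_general M G m₀ hm₀ h hh F γ B' u' cv T' δF heq1 heq2
end
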